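/- In Ensemble 1 with block length N, stacking parameter q ≥ 2, and, for each check-node type t ∈ I_c, n_t diagonal copies of H̄_t in H_1 (weight enumerators A^{(t)}(z)), the expected number M(d) of weight-d codewords of a random code from the ensemble satisfies, for every real z > 0 and every 1 ≤ d ≤ N, M(d) ≤ binom(N,d)^{−(q−1)} · exp( q·[ ∑_{t∈I_c} n_t · log A^{(t)}(z) − d·log z ] ). Equivalently, with m = q·∑_t n_t check nodes and n_t = γ_t m/q, M(d) ≤ binom(N,d)^{−(q−1)} exp( m ∑_t γ_t log A^{(t)}(z) − q d log z ). -/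

import Mathlib

/-- The set of codewords of the binary linear code with parity-check matrix `H`. -/
def localCode {mr n : ℕ} (H : Matrix (Fin mr) (Fin n) (ZMod 2)) :
    Finset (Fin n → ZMod 2) :=
  Finset.univ.filter (fun v => Matrix.mulVec H v = 0)

/-- The weight enumerating function of the code with parity-check matrix `H`,
evaluated at a real number `z`: `A(z) = ∑_{v ∈ C} z^{wt(v)}`. -/
noncomputable def wefEval {mr n : ℕ} (H : Matrix (Fin mr) (Fin n) (ZMod 2)) (z : ℝ) : ℝ :=
  ∑ v ∈ localCode H, z ^ hammingNorm v

/-!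
Fix a weight-`d` codeword `c` of `H₁`. The permutations `σ` for which `c ∘ σ` is again a codeword
of `H₁` fall into at most `A_d` cosets of the stabilizer of `c`, which has `d! (N - d)!` elements.
Hence each of the `q - 1` independent permuted copies accepts `c` with probability at most
`A_d / C(N, d)`, and `M(d) ≤ A_d ^ q / C(N, d) ^ (q - 1)`. Finally `A_d z ^ d` is at most the
weight enumerator of `H₁` at `z`, which factors over the diagonal blocks as `∏_t A^{(t)}(z) ^ n_t`.
-/

open Finset Matrix
open scoped Nat

lemma hammingNorm_comp_perm {α ι : Type*} [Fintype α] [Zero ι] [DecidableEq ι] (c : α → ι)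
    (σ : Equiv.Perm α) :
    hammingNorm (c ∘ σ) = hammingNorm c := by
  simp only [hammingNorm, card_filter]
  exact Equiv.sum_comp σ fun x => if c x ≠ 0 then 1 else 0

lemma hammingNorm_sigma {o R : Type*} {n' : o → Type*} [Fintype o] [∀ i, Fintype (n' i)] [Zero R]
    [DecidableEq R] (v : (Σ i, n' i) → R) :
    hammingNorm v = ∑ i, hammingNorm fun j => v ⟨i, j⟩ := by
  simp only [hammingNorm, card_filter, ← univ_sigma_univ, sum_sigma]

lemma card_filter_hammingNorm_eq_mul_pow_le_sum {ι R S : Type*} [Fintype ι] [Zero R]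
    [DecidableEq R] [Semiring S] [PartialOrder S] [IsOrderedRing S] (K : Finset (ι → R)) (d : ℕ)
    {z : S} (hz : 0 ≤ z) :
    (#{v ∈ K | hammingNorm v = d} : S) * z ^ d ≤ ∑ v ∈ K, z ^ hammingNorm v := by
  calc (#{v ∈ K | hammingNorm v = d} : S) * z ^ d
      = ∑ v ∈ K with hammingNorm v = d, z ^ hammingNorm v := by
        rw [sum_congr rfl fun v hv => by rw [(mem_filter.1 hv).2], sum_const, nsmul_eq_mul]
    _ ≤ ∑ v ∈ K, z ^ hammingNorm v :=
        sum_le_sum_of_subset_of_nonneg (filter_subset _ _) fun _ _ _ => pow_nonneg hz _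

lemma sum_card_filter_forall_eq_sum_pow {γ G κ : Type*} [Fintype G] [Fintype κ] [DecidableEq κ]
    (K : Finset γ) (R : γ → G → Prop) [∀ c g, Decidable (R c g)] :
    ∑ ω : κ → G, #{c ∈ K | ∀ ℓ, R c (ω ℓ)} = ∑ c ∈ K, #{g | R c g} ^ Fintype.card κ := by
  simp only [card_filter]
  rw [sum_comm]
  refine sum_congr rfl fun c _ => ?_
  have hpi : ({ω | ∀ ℓ, R c (ω ℓ)} : Finset (κ → G)) = Fintype.piFinset fun _ => {g | R c g} := by
    ext ω
    simp
  rw [← card_filter, ← card_filter, hpi, Fintype.card_piFinset, prod_const, card_univ]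

section Permutations

variable {α ι : Type*} [Fintype α] [DecidableEq α]

lemma card_filter_comp_perm_eq_le [DecidableEq ι] (c v : α → ι) :
    #{σ : Equiv.Perm α | c ∘ σ = v} ≤ Fintype.card {g : Equiv.Perm α // c ∘ g = c} := by
  rw [Fintype.card_subtype]
  rcases eq_empty_or_nonempty {σ : Equiv.Perm α | c ∘ σ = v} with hempty | ⟨σ₀, hσ₀⟩
  · simp [hempty]
  refine card_le_card_of_injOn (· * σ₀⁻¹) (fun σ hσ => ?_) fun σ _ τ _ => mul_right_cancel
  simp only [mem_filter, coe_filter, mem_univ, true_and, Set.mem_ofPred_eq] at hσ hσ₀ ⊢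
  rw [Equiv.Perm.coe_mul, ← Function.comp_assoc, hσ, ← hσ₀, Function.comp_assoc,
    ← Equiv.Perm.coe_mul, mul_inv_cancel, Equiv.Perm.coe_one, Function.comp_id]

lemma card_filter_comp_perm_mem_le [DecidableEq ι] (c : α → ι) (K : Finset (α → ι)) :
    #{σ : Equiv.Perm α | c ∘ σ ∈ K} ≤ #K * Fintype.card {g : Equiv.Perm α // c ∘ g = c} := by
  calc #{σ : Equiv.Perm α | c ∘ σ ∈ K}
      ≤ #(K.biUnion fun v => {σ : Equiv.Perm α | c ∘ σ = v}) :=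
        card_le_card fun σ hσ => mem_biUnion.2 ⟨c ∘ σ, (mem_filter.1 hσ).2, by simp⟩
    _ ≤ ∑ v ∈ K, #{σ : Equiv.Perm α | c ∘ σ = v} := card_biUnion_le
    _ ≤ #K * Fintype.card {g : Equiv.Perm α // c ∘ g = c} :=
        sum_le_card_nsmul _ _ _ fun v _ => card_filter_comp_perm_eq_le c v

lemma card_perm_comp_eq_self_zmod_two (c : α → ZMod 2) :
    Fintype.card {g : Equiv.Perm α // c ∘ g = c} =
      (hammingNorm c)! * (Fintype.card α - hammingNorm c)! := by
  have hsupp : Fintype.card {a // c a = 1} = hammingNorm c := by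
    have hone : ∀ x : ZMod 2, x = 1 ↔ x ≠ 0 := by decide
    simp only [Fintype.card_subtype, hammingNorm, hone]
  have hzero : Fintype.card {a // c a = 0} = Fintype.card α - hammingNorm c := by
    rw [Fintype.card_subtype, hammingNorm, ← card_univ,
      ← card_filter_add_card_filter_not (s := univ) (c · = 0)]
    simp
  rw [DomMulAct.stabilizer_card, mul_comm]
  change ∏ i : Fin 2, _ = _
  rw [Fin.prod_univ_two]
  exact congrArg₂ (·! * ·!) hzero hsupp

lemma sum_card_codewords_comp_perm_le {β κ : Type*} [Fintype β] [Fintype κ] [DecidableEq κ]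
    (H : Matrix β α (ZMod 2)) (d : ℕ) :
    ∑ ω : κ → Equiv.Perm α,
        #{c | hammingNorm c = d ∧ H *ᵥ c = 0 ∧ ∀ ℓ, H *ᵥ (c ∘ ω ℓ) = 0} ≤
      #{v | hammingNorm v = d ∧ H *ᵥ v = 0} ^ (Fintype.card κ + 1) *
        (d ! * (Fintype.card α - d)!) ^ Fintype.card κ := by
  set K : Finset (α → ZMod 2) := {v | hammingNorm v = d ∧ H *ᵥ v = 0}
  have hfilter : ∀ ω : κ → Equiv.Perm α,
      ({c | hammingNorm c = d ∧ H *ᵥ c = 0 ∧ ∀ ℓ, H *ᵥ (c ∘ ω ℓ) = 0} : Finset (α → ZMod 2)) =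
        {c ∈ K | ∀ ℓ, c ∘ ω ℓ ∈ K} := by
    intro ω
    ext c
    simp only [K, mem_filter, mem_univ, true_and, hammingNorm_comp_perm]
    exact ⟨fun ⟨hd, hc, hperm⟩ => ⟨⟨hd, hc⟩, fun ℓ => ⟨hd, hperm ℓ⟩⟩,
      fun ⟨⟨hd, hc⟩, hperm⟩ => ⟨hd, hc, fun ℓ => (hperm ℓ).2⟩⟩
  have hcount : ∀ c ∈ K, #{σ : Equiv.Perm α | c ∘ σ ∈ K} ≤ #K * (d ! * (Fintype.card α - d)!) :=
    fun c hc => by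
      rw [← (mem_filter.1 hc).2.1, ← card_perm_comp_eq_self_zmod_two]
      exact card_filter_comp_perm_mem_le c K
  calc ∑ ω : κ → Equiv.Perm α, #{c | hammingNorm c = d ∧ H *ᵥ c = 0 ∧ ∀ ℓ, H *ᵥ (c ∘ ω ℓ) = 0}
      = ∑ c ∈ K, #{σ : Equiv.Perm α | c ∘ σ ∈ K} ^ Fintype.card κ := by
        simp only [hfilter]
        exact sum_card_filter_forall_eq_sum_pow K fun c (σ : Equiv.Perm α) => c ∘ σ ∈ K
    _ ≤ ∑ _c ∈ K, (#K * (d ! * (Fintype.card α - d)!)) ^ Fintype.card κ :=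
        sum_le_sum fun c hc => Nat.pow_le_pow_left (hcount c hc) _
    _ = #K ^ (Fintype.card κ + 1) * (d ! * (Fintype.card α - d)!) ^ Fintype.card κ := by
        rw [sum_const, smul_eq_mul, mul_pow]
        ring

lemma expected_card_codewords_le {β : Type*} [Fintype β] (H : Matrix β α (ZMod 2)) (k d : ℕ)
    (hdN : d ≤ Fintype.card α) :
    (∑ ω : Fin k → Equiv.Perm α,
        (#{c | hammingNorm c = d ∧ H *ᵥ c = 0 ∧ ∀ ℓ, H *ᵥ (c ∘ ω ℓ) = 0} : ℝ)) /
        Fintype.card (Fin k → Equiv.Perm α) ≤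
      (#{v | hammingNorm v = d ∧ H *ᵥ v = 0} : ℝ) ^ (k + 1) *
        ((Fintype.card α).choose d : ℝ)⁻¹ ^ k := by
  set N := Fintype.card α
  have hfac : (N ! : ℝ) = N.choose d * (d ! * (N - d)!) := by
    rw [← Nat.choose_mul_factorial_mul_factorial hdN]
    push_cast
    ring
  have hchoose : (N.choose d : ℝ) ≠ 0 := by exact_mod_cast (Nat.choose_pos hdN).ne'
  have hbound := sum_card_codewords_comp_perm_le (κ := Fin k) H d
  rw [Fintype.card_fin] at hbound
  rw [← Nat.cast_sum, Fintype.card_fun, Fintype.card_perm, Fintype.card_fin,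
    div_le_iff₀ (by positivity)]
  calc _ ≤ ((#{v | hammingNorm v = d ∧ H *ᵥ v = 0} ^ (k + 1) * (d ! * (N - d)!) ^ k : ℕ) : ℝ) := by
        exact_mod_cast hbound
    _ = _ := by
        rw [Nat.cast_pow N !, hfac, mul_pow _ (_ * _), ← mul_assoc, mul_assoc _ (_⁻¹ ^ k), ← mul_pow,
          inv_mul_cancel₀ hchoose, one_pow, mul_one]
        push_cast
        rfl

end Permutations

section BlockDiagonal

variable {o R : Type*} {m' n' : o → Type*} [Fintype o] [DecidableEq o] [∀ i, Fintype (n' i)]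

lemma blockDiagonal'_mulVec_apply [NonUnitalNonAssocSemiring R] (M : ∀ i, Matrix (m' i) (n' i) R)
    (v : (Σ i, n' i) → R) (i : o) (a : m' i) :
    (blockDiagonal' M *ᵥ v) ⟨i, a⟩ = (M i *ᵥ fun j => v ⟨i, j⟩) a := by
  simp only [mulVec, dotProduct, ← univ_sigma_univ, sum_sigma]
  rw [sum_eq_single i (fun i' _ hi' => sum_eq_zero fun j _ => by
      rw [blockDiagonal'_apply_ne _ _ _ hi'.symm, zero_mul]) (by simp)]
  simp only [blockDiagonal'_apply_eq]

lemma blockDiagonal'_mulVec_eq_zero_iff [NonUnitalNonAssocSemiring R]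
    (M : ∀ i, Matrix (m' i) (n' i) R) (v : (Σ i, n' i) → R) :
    blockDiagonal' M *ᵥ v = 0 ↔ ∀ i, M i *ᵥ (fun j => v ⟨i, j⟩) = 0 := by
  simp only [funext_iff, Sigma.forall, blockDiagonal'_mulVec_apply, Pi.zero_apply]

lemma sum_ker_blockDiagonal'_pow_hammingNorm {S : Type*} [Semiring R] [Fintype R] [DecidableEq R]
    [∀ i, DecidableEq (n' i)] [∀ i, Fintype (m' i)] [CommSemiring S]
    (M : ∀ i, Matrix (m' i) (n' i) R) (z : S) :
    ∑ v ∈ {v | blockDiagonal' M *ᵥ v = 0}, z ^ hammingNorm v =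
      ∏ i, ∑ w ∈ {w | M i *ᵥ w = 0}, z ^ hammingNorm w := by
  rw [prod_univ_sum]
  refine sum_equiv (Equiv.piCurry fun _ _ => R) (fun v => ?_) fun v _ => ?_
  · simp only [mem_filter, mem_univ, true_and, Fintype.mem_piFinset,
      blockDiagonal'_mulVec_eq_zero_iff]
    rfl
  · rw [hammingNorm_sigma, prod_pow_eq_pow_sum]
    rfl

end BlockDiagonal

lemma wefEval_pos {mr s : ℕ} (H : Matrix (Fin mr) (Fin s) (ZMod 2)) {z : ℝ} (hz : 0 < z) :
    0 < wefEval H z :=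
  sum_pos (fun _ _ => pow_pos hz _) ⟨0, by simp [localCode]⟩

lemma sum_ker_blockDiagonal'_eq_prod_wefEval {T : ℕ} {s mr n : Fin T → ℕ}
    (Hbar : ∀ t, Matrix (Fin (mr t)) (Fin (s t)) (ZMod 2)) (z : ℝ) :
    ∑ v ∈ {v | blockDiagonal' (fun p : Σ t, Fin (n t) => Hbar p.1) *ᵥ v = 0}, z ^ hammingNorm v =
      ∏ t, wefEval (Hbar t) z ^ n t := by
  rw [sum_ker_blockDiagonal'_pow_hammingNorm, ← univ_sigma_univ, prod_sigma]
  exact prod_congr rfl fun t _ => Fin.prod_const (n t) (wefEval (Hbar t) z)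

lemma card_codewords_mul_pow_le_prod_wefEval {T : ℕ} {s mr n : Fin T → ℕ}
    (Hbar : ∀ t, Matrix (Fin (mr t)) (Fin (s t)) (ZMod 2)) (d : ℕ) {z : ℝ} (hz : 0 ≤ z) :
    (#{v | hammingNorm v = d ∧ blockDiagonal' (fun p : Σ t, Fin (n t) => Hbar p.1) *ᵥ v = 0} : ℝ) *
        z ^ d ≤ ∏ t, wefEval (Hbar t) z ^ n t := by
  rw [← sum_ker_blockDiagonal'_eq_prod_wefEval]
  simp only [and_comm (a := hammingNorm _ = d), ← filter_filter]
  exact card_filter_hammingNorm_eq_mul_pow_le_sum _ d hz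

theorem stmt_8_general (q T : ℕ) (hq : 2 ≤ q) (s mr n : Fin T → ℕ)
    (Hbar : ∀ t : Fin T, Matrix (Fin (mr t)) (Fin (s t)) (ZMod 2))
    (d : ℕ)
    (hdN : d ≤ Fintype.card (Σ p : (Σ t : Fin T, Fin (n t)), Fin (s p.1)))
    (z : ℝ) (hz : 0 < z)
    (M : ℝ)
    (hM : M =
      (∑ ω : Fin (q - 1) → Equiv.Perm (Σ p : (Σ t : Fin T, Fin (n t)), Fin (s p.1)),
          ((Finset.univ.filter
              (fun c : (Σ p : (Σ t : Fin T, Fin (n t)), Fin (s p.1)) → ZMod 2 =>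
                hammingNorm c = d ∧
                Matrix.mulVec
                    (Matrix.blockDiagonal' (fun p : Σ t : Fin T, Fin (n t) => Hbar p.1)) c
                  = 0 ∧
                ∀ ℓ : Fin (q - 1),
                  Matrix.mulVec
                      (Matrix.blockDiagonal' (fun p : Σ t : Fin T, Fin (n t) => Hbar p.1))
                      (fun x => c (ω ℓ x)) = 0)).card : ℝ))
        / (Fintype.card
            (Fin (q - 1) → Equiv.Perm (Σ p : (Σ t : Fin T, Fin (n t)), Fin (s p.1))) : ℝ)) :
    M ≤ ((Nat.choose (Fintype.card (Σ p : (Σ t : Fin T, Fin (n t)), Fin (s p.1))) d : ℝ))⁻¹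
          ^ (q - 1)
        * Real.exp ((q : ℝ) *
            ((∑ t : Fin T, (n t : ℝ) * Real.log (wefEval (Hbar t) z)) - d * Real.log z)) := by
  set H₁ := blockDiagonal' fun p : Σ t : Fin T, Fin (n t) => Hbar p.1
  set A : ℕ := #{v | hammingNorm v = d ∧ H₁ *ᵥ v = 0}
  set W := ∏ t, wefEval (Hbar t) z ^ n t
  have hW : 0 < W := prod_pos fun t _ => pow_pos (wefEval_pos (Hbar t) hz) _
  have hAW : (A : ℝ) ≤ W / z ^ d :=
    (le_div_iff₀ (pow_pos hz d)).2 (card_codewords_mul_pow_le_prod_wefEval Hbar d hz.le)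
  have hexp : Real.exp ((q : ℝ) *
      ((∑ t : Fin T, (n t : ℝ) * Real.log (wefEval (Hbar t) z)) - d * Real.log z)) =
        (W / z ^ d) ^ q := by
    rw [← Real.exp_log (by positivity : 0 < (W / z ^ d) ^ q), Real.log_pow,
      Real.log_div hW.ne' (by positivity), Real.log_pow,
      Real.log_prod fun t _ => (pow_pos (wefEval_pos (Hbar t) hz) _).ne']
    simp only [Real.log_pow]
  calc M ≤ (A : ℝ) ^ (q - 1 + 1) * ((Fintype.card _).choose d : ℝ)⁻¹ ^ (q - 1) :=
        hM ▸ expected_card_codewords_le H₁ (q - 1) d hdN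
    _ ≤ (W / z ^ d) ^ q * ((Fintype.card _).choose d : ℝ)⁻¹ ^ (q - 1) := by
        rw [Nat.sub_add_cancel (by omega)]
        gcongr
    _ = _ := by rw [hexp, mul_comm]

/-- In Ensemble 1 (block-diagonal `H₁` with `n_t` copies of `H̄_t` for each type `t`,
stacked with `q − 1` independently and uniformly column-permuted copies of itself), the
expected number `M(d)` of weight-`d` codewords satisfies, for every real `z > 0` and
every `1 ≤ d ≤ N`,
`M(d) ≤ C(N,d)^{−(q−1)} · exp( q·(∑_t n_t log A^{(t)}(z) − d log z) )`. -/
theorem stmt_8 (q T : ℕ) (hq : 2 ≤ q) (s mr n : Fin T → ℕ)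
    (Hbar : ∀ t : Fin T, Matrix (Fin (mr t)) (Fin (s t)) (ZMod 2))
    (d : ℕ) (hd : 1 ≤ d)
    (hdN : d ≤ Fintype.card (Σ p : (Σ t : Fin T, Fin (n t)), Fin (s p.1)))
    (z : ℝ) (hz : 0 < z)
    (M : ℝ)
    (hM : M =
      (∑ ω : Fin (q - 1) → Equiv.Perm (Σ p : (Σ t : Fin T, Fin (n t)), Fin (s p.1)),
          ((Finset.univ.filter
              (fun c : (Σ p : (Σ t : Fin T, Fin (n t)), Fin (s p.1)) → ZMod 2 =>
                hammingNorm c = d ∧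
                Matrix.mulVec
                    (Matrix.blockDiagonal' (fun p : Σ t : Fin T, Fin (n t) => Hbar p.1)) c
                  = 0 ∧
                ∀ ℓ : Fin (q - 1),
                  Matrix.mulVec
                      (Matrix.blockDiagonal' (fun p : Σ t : Fin T, Fin (n t) => Hbar p.1))
                      (fun x => c (ω ℓ x)) = 0)).card : ℝ))
        / (Fintype.card
            (Fin (q - 1) → Equiv.Perm (Σ p : (Σ t : Fin T, Fin (n t)), Fin (s p.1))) : ℝ)) :
    M ≤ ((Nat.choose (Fintype.card (Σ p : (Σ t : Fin T, Fin (n t)), Fin (s p.1))) d : ℝ))⁻¹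
          ^ (q - 1)
        * Real.exp ((q : ℝ) *
            ((∑ t : Fin T, (n t : ℝ) * Real.log (wefEval (Hbar t) z)) - d * Real.log z)) :=
  stmt_8_general q T hq s mr n Hbar d hdN z hz M hM
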